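/- arXiv:2512.14349 — 3 statements merged into one kernel-verified Lean document; each statement's English description precedes it below -/
import Mathlib

section
/- If q̇ = ν + v is the decomposition of a velocity with ν ∈ Ker(J) and v ∈ Ker(J)^⊥ (M-orthogonal complement), and η = J q̇ is the task velocity, then the task-space kinetic energy is (1/2) vᵀ M v = (1/2) ηᵀ Λ η, where Λ = (J M⁻¹ Jᵀ)⁻¹. Equivalently, (J_M^#)ᵀ M J_M^# = Λ. -/
open Matrix

/-- The orthogonal complement of a subspace `S ⊆ ℝⁿ` with respect to the inner
product induced by a matrix `M`, i.e. `{v | vᵀ M s = 0 for all s ∈ S}`. -/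
def mOrthComplement {n : ℕ} (M : Matrix (Fin n) (Fin n) ℝ)
    (S : Submodule ℝ (Fin n → ℝ)) : Submodule ℝ (Fin n → ℝ) where
  carrier := {v | ∀ s ∈ S, v ⬝ᵥ M.mulVec s = 0}
  add_mem' := by
    intro a b ha hb s hs
    simp [add_dotProduct, ha s hs, hb s hs]
  zero_mem' := by
    intro s hs
    simp
  smul_mem' := by
    intro c a ha s hs
    simp [smul_dotProduct, ha s hs]

/-- The dynamically consistent pseudoinverse `J_M^# = M⁻¹ Jᵀ (J M⁻¹ Jᵀ)⁻¹`. -/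
noncomputable def dynConsistentPseudoinverse {n m : ℕ}
    (M : Matrix (Fin n) (Fin n) ℝ) (J : Matrix (Fin m) (Fin n) ℝ) :
    Matrix (Fin n) (Fin m) ℝ :=
  M⁻¹ * Jᵀ * (J * M⁻¹ * Jᵀ)⁻¹

/-!
Since `M J_M^# = Jᵀ Λ` and `J J_M^# = 1`, the Gram matrix `(J_M^#)ᵀ M J_M^#` collapses to `Λ`.
The range of `J_M^#` is `M`-orthogonal to `Ker J`, so `v - J_M^# (J v)` lies both in `Ker J` and
in its `M`-orthogonal complement, hence vanishes by positive definiteness. Thus `v = J_M^# η`,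
and `vᵀ M v = ηᵀ (J_M^#)ᵀ M J_M^# η = ηᵀ Λ η`.
-/

theorem Matrix.linearIndependent_row_of_rank_eq_card {K : Type*} [Field K] {ι κ : Type*}
    [Fintype ι] [Fintype κ] {A : Matrix ι κ K} (h : A.rank = Fintype.card ι) :
    LinearIndependent K A.row := by
  rw [linearIndependent_iff_card_eq_finrank_span, Set.finrank, ← rank_eq_finrank_span_row, h]

theorem Matrix.dotProduct_mulVec_mulVec_mulVec {R : Type*} [CommSemiring R] {ι κ : Type*}
    [Fintype ι] [Fintype κ] (A : Matrix ι ι R) (B : Matrix ι κ R) (x : κ → R) :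
    (B *ᵥ x) ⬝ᵥ A *ᵥ (B *ᵥ x) = x ⬝ᵥ (Bᵀ * A * B) *ᵥ x := by
  rw [← mulVec_mulVec, ← mulVec_mulVec, dotProduct_mulVec x Bᵀ, vecMul_transpose]

theorem eq_zero_of_mem_of_mem_mOrthComplement {n : ℕ} {M : Matrix (Fin n) (Fin n) ℝ}
    (hM : M.PosDef) {S : Submodule ℝ (Fin n → ℝ)} {x : Fin n → ℝ} (hxS : x ∈ S)
    (hx : x ∈ mOrthComplement M S) : x = 0 := by
  by_contra hx0
  simpa [hx x hxS] using hM.dotProduct_mulVec_pos hx0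

section DynConsistentPseudoinverse

variable {n m : ℕ} (M : Matrix (Fin n) (Fin n) ℝ) (J : Matrix (Fin m) (Fin n) ℝ)

theorem posDef_mul_inv_mul_transpose (hM : M.PosDef) (hJ : J.rank = m) :
    (J * M⁻¹ * Jᵀ).PosDef := by
  have hrows : Function.Injective J.vecMul :=
    vecMul_injective_iff.mpr (linearIndependent_row_of_rank_eq_card (by simpa using hJ))
  simpa [conjTranspose_eq_transpose_of_trivial] using hM.inv.mul_mul_conjTranspose_same hrows

theorem mul_dynConsistentPseudoinverse_eq_one (hΛ : IsUnit (J * M⁻¹ * Jᵀ).det) :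
    J * dynConsistentPseudoinverse M J = 1 := by
  rw [dynConsistentPseudoinverse, ← Matrix.mul_assoc, ← Matrix.mul_assoc, mul_nonsing_inv _ hΛ]

theorem mul_dynConsistentPseudoinverse_eq_transpose_mul (hM : IsUnit M.det) :
    M * dynConsistentPseudoinverse M J = Jᵀ * (J * M⁻¹ * Jᵀ)⁻¹ := by
  rw [dynConsistentPseudoinverse, Matrix.mul_assoc, mul_nonsing_inv_cancel_left _ _ hM]

theorem transpose_dynConsistentPseudoinverse_mul_mul (hM : IsUnit M.det)
    (hΛ : IsUnit (J * M⁻¹ * Jᵀ).det) :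
    (dynConsistentPseudoinverse M J)ᵀ * M * dynConsistentPseudoinverse M J =
      (J * M⁻¹ * Jᵀ)⁻¹ := by
  rw [Matrix.mul_assoc, mul_dynConsistentPseudoinverse_eq_transpose_mul M J hM,
    ← Matrix.mul_assoc, ← transpose_mul, mul_dynConsistentPseudoinverse_eq_one M J hΛ,
    transpose_one, Matrix.one_mul]

theorem dynConsistentPseudoinverse_mulVec_mem_mOrthComplement (hMs : M.IsSymm)
    (hM : IsUnit M.det) (η : Fin m → ℝ) :
    dynConsistentPseudoinverse M J *ᵥ η ∈ mOrthComplement M (LinearMap.ker J.mulVecLin) := by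
  intro s hs
  calc (dynConsistentPseudoinverse M J *ᵥ η) ⬝ᵥ M *ᵥ s
      = (M *ᵥ (dynConsistentPseudoinverse M J *ᵥ η)) ⬝ᵥ s := by
        rw [dotProduct_mulVec, ← mulVec_transpose, hMs.eq]
    _ = ((J * M⁻¹ * Jᵀ)⁻¹ *ᵥ η) ⬝ᵥ J *ᵥ s := by
        rw [mulVec_mulVec, mul_dynConsistentPseudoinverse_eq_transpose_mul M J hM,
          ← mulVec_mulVec, mulVec_transpose, ← dotProduct_mulVec]
    _ = 0 := by rw [show J *ᵥ s = 0 from hs, dotProduct_zero]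

theorem dynConsistentPseudoinverse_mulVec_mulVec_of_mem_mOrthComplement (hM : M.PosDef)
    (hΛ : IsUnit (J * M⁻¹ * Jᵀ).det) {v : Fin n → ℝ}
    (hv : v ∈ mOrthComplement M (LinearMap.ker J.mulVecLin)) :
    dynConsistentPseudoinverse M J *ᵥ (J *ᵥ v) = v := by
  have hker : v - dynConsistentPseudoinverse M J *ᵥ (J *ᵥ v) ∈ LinearMap.ker J.mulVecLin := by
    rw [LinearMap.mem_ker, mulVecLin_apply, mulVec_sub, mulVec_mulVec,
      mul_dynConsistentPseudoinverse_eq_one M J hΛ, one_mulVec, sub_self]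
  have hperp := sub_mem hv <| dynConsistentPseudoinverse_mulVec_mem_mOrthComplement M J
    (by simpa using hM.isHermitian) ((isUnit_iff_isUnit_det M).mp hM.isUnit) (J *ᵥ v)
  exact (sub_eq_zero.mp (eq_zero_of_mem_of_mem_mOrthComplement hM hker hperp)).symm

end DynConsistentPseudoinverse

theorem task_space_kinetic_energy_general
    {n m : ℕ}
    (M : Matrix (Fin n) (Fin n) ℝ) (J : Matrix (Fin m) (Fin n) ℝ)
    (hM : M.PosDef) (hJ : J.rank = m)
    (qdot ν v : Fin n → ℝ) (η : Fin m → ℝ)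
    (hν : ν ∈ LinearMap.ker J.mulVecLin)
    (hv : v ∈ mOrthComplement M (LinearMap.ker J.mulVecLin))
    (hsum : qdot = ν + v)
    (hη : η = J.mulVec qdot) :
    (1 / 2 : ℝ) * (v ⬝ᵥ M.mulVec v) =
      (1 / 2 : ℝ) * (η ⬝ᵥ (J * M⁻¹ * Jᵀ)⁻¹.mulVec η) ∧
    (dynConsistentPseudoinverse M J)ᵀ * M * dynConsistentPseudoinverse M J =
      (J * M⁻¹ * Jᵀ)⁻¹ := by
  have hΛ : IsUnit (J * M⁻¹ * Jᵀ).det :=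
    (isUnit_iff_isUnit_det _).mp (posDef_mul_inv_mul_transpose M J hM hJ).isUnit
  have hgram := transpose_dynConsistentPseudoinverse_mul_mul M J
    ((isUnit_iff_isUnit_det M).mp hM.isUnit) hΛ
  have hηv : η = J *ᵥ v := by
    rw [hη, hsum, mulVec_add, show J *ᵥ ν = 0 from hν, zero_add]
  have hvη : v = dynConsistentPseudoinverse M J *ᵥ η := by
    rw [hηv, dynConsistentPseudoinverse_mulVec_mulVec_of_mem_mOrthComplement M J hM hΛ hv]
  refine ⟨?_, hgram⟩
  rw [hvη, dotProduct_mulVec_mulVec_mulVec, hgram]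

/-- With `q̇ = ν + v`, `ν ∈ Ker J`, `v ∈ (Ker J)ᗮ` and
`η = J q̇`, the task-space kinetic energy satisfies
`(1/2) vᵀ M v = (1/2) ηᵀ Λ η` with `Λ = (J M⁻¹ Jᵀ)⁻¹`; equivalently
`(J_M^#)ᵀ M J_M^# = Λ`. -/
theorem task_space_kinetic_energy
    {n m : ℕ} (hmn : m ≤ n)
    (M : Matrix (Fin n) (Fin n) ℝ) (J : Matrix (Fin m) (Fin n) ℝ)
    (hM : M.PosDef) (hJ : J.rank = m)
    (qdot ν v : Fin n → ℝ) (η : Fin m → ℝ)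
    (hν : ν ∈ LinearMap.ker J.mulVecLin)
    (hv : v ∈ mOrthComplement M (LinearMap.ker J.mulVecLin))
    (hsum : qdot = ν + v)
    (hη : η = J.mulVec qdot) :
    (1 / 2 : ℝ) * (v ⬝ᵥ M.mulVec v) =
      (1 / 2 : ℝ) * (η ⬝ᵥ (J * M⁻¹ * Jᵀ)⁻¹.mulVec η) ∧
    (dynConsistentPseudoinverse M J)ᵀ * M * dynConsistentPseudoinverse M J =
      (J * M⁻¹ * Jᵀ)⁻¹ :=
  task_space_kinetic_energy_general M J hM hJ qdot ν v η hν hv hsum hη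
end

section
/- The extended Jacobian J̄ = [J; N] (the n×n matrix obtained by stacking J over N, where N = (Z M Zᵀ)⁻¹ Z M) is invertible, and its inverse is the n×n matrix [J_M^# Zᵀ] obtained by placing J_M^# and Zᵀ side by side. In particular J J_M^# = I_m, J Zᵀ = 0, N J_M^# = 0, N Zᵀ = I_{n−m}, and J_M^# J + Zᵀ N = I_n. -/
open Matrix

theorem Matrix.linearIndependent_row_of_rank_eq_card_s10 {K m n : Type*} [Field K] [Fintype m]
    [Fintype n] {B : Matrix m n K} (hB : B.rank = Fintype.card m) : LinearIndependent K B.row := by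
  rw [linearIndependent_iff_card_eq_finrank_span, Set.finrank, ← rank_eq_finrank_span_row, hB]

theorem Matrix.PosDef.mul_mul_transpose_of_rank_eq_card {k n : Type*} [Fintype k] [Fintype n]
    {M : Matrix n n ℝ} (hM : M.PosDef) {B : Matrix k n ℝ} (hB : B.rank = Fintype.card k) :
    (B * M * Bᵀ).PosDef := by
  rw [← conjTranspose_eq_transpose_of_trivial]
  exact hM.mul_mul_conjTranspose_same
    (vecMul_injective_iff.2 (linearIndependent_row_of_rank_eq_card_s10 hB))

theorem mul_dynConsistentPseudoinverse {n m : ℕ} {M : Matrix (Fin n) (Fin n) ℝ}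
    (hM : M.PosDef) {J : Matrix (Fin m) (Fin n) ℝ} (hJ : J.rank = m) :
    J * dynConsistentPseudoinverse M J = 1 := by
  have hJMJ : (J * M⁻¹ * Jᵀ).PosDef :=
    hM.inv.mul_mul_transpose_of_rank_eq_card (by rw [hJ, Fintype.card_fin])
  rw [dynConsistentPseudoinverse, ← Matrix.mul_assoc, ← Matrix.mul_assoc,
    mul_nonsing_inv _ hJMJ.det_pos.ne'.isUnit]

theorem mul_mul_dynConsistentPseudoinverse_of_mul_transpose_eq_zero {n m k : ℕ}
    {M : Matrix (Fin n) (Fin n) ℝ} (hM : IsUnit M.det) {J : Matrix (Fin m) (Fin n) ℝ}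
    {Z : Matrix (Fin k) (Fin n) ℝ} (hJZ : J * Zᵀ = 0) :
    Z * M * dynConsistentPseudoinverse M J = 0 := by
  have hZJ : Z * Jᵀ = 0 := by
    rw [← transpose_transpose (Z * Jᵀ), transpose_mul, transpose_transpose, hJZ, transpose_zero]
  rw [dynConsistentPseudoinverse, Matrix.mul_assoc, ← Matrix.mul_assoc M, ← Matrix.mul_assoc M,
    mul_nonsing_inv _ hM, Matrix.one_mul, ← Matrix.mul_assoc, hZJ, Matrix.zero_mul]

/-- With `N = (Z M Zᵀ)⁻¹ Z M`, the extended Jacobian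
`J̄ = [J; N]` is invertible with inverse `[J_M^#  Zᵀ]`; in particular
`J J_M^# = I`, `J Zᵀ = 0`, `N J_M^# = 0`, `N Zᵀ = I`, and
`J_M^# J + Zᵀ N = I`. -/
theorem extended_jacobian_inverse
    {n m : ℕ} (hmn : m ≤ n)
    (M : Matrix (Fin n) (Fin n) ℝ) (J : Matrix (Fin m) (Fin n) ℝ)
    (Z : Matrix (Fin (n - m)) (Fin n) ℝ)
    (hM : M.PosDef) (hJ : J.rank = m)
    (hZ : Z.rank = n - m) (hJZ : J * Zᵀ = 0) :
    (fromRows J ((Z * M * Zᵀ)⁻¹ * Z * M)) *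
        (fromCols (dynConsistentPseudoinverse M J) Zᵀ) =
        (1 : Matrix (Fin m ⊕ Fin (n - m)) (Fin m ⊕ Fin (n - m)) ℝ) ∧
    (fromCols (dynConsistentPseudoinverse M J) Zᵀ) *
        (fromRows J ((Z * M * Zᵀ)⁻¹ * Z * M)) =
        (1 : Matrix (Fin n) (Fin n) ℝ) ∧
    J * dynConsistentPseudoinverse M J = (1 : Matrix (Fin m) (Fin m) ℝ) ∧
    J * Zᵀ = 0 ∧
    ((Z * M * Zᵀ)⁻¹ * Z * M) * dynConsistentPseudoinverse M J = 0 ∧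
    ((Z * M * Zᵀ)⁻¹ * Z * M) * Zᵀ =
        (1 : Matrix (Fin (n - m)) (Fin (n - m)) ℝ) ∧
    dynConsistentPseudoinverse M J * J + Zᵀ * ((Z * M * Zᵀ)⁻¹ * Z * M) =
        (1 : Matrix (Fin n) (Fin n) ℝ) := by
  have hJJp : J * dynConsistentPseudoinverse M J = 1 := mul_dynConsistentPseudoinverse hM hJ
  have hNJp : (Z * M * Zᵀ)⁻¹ * Z * M * dynConsistentPseudoinverse M J = 0 := by
    rw [Matrix.mul_assoc _ Z, Matrix.mul_assoc,
      mul_mul_dynConsistentPseudoinverse_of_mul_transpose_eq_zero hM.det_pos.ne'.isUnit hJZ,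
      Matrix.mul_zero]
  have hNZ : (Z * M * Zᵀ)⁻¹ * Z * M * Zᵀ = 1 := by
    have hZMZ := hM.mul_mul_transpose_of_rank_eq_card (B := Z) (by rw [hZ, Fintype.card_fin])
    rw [Matrix.mul_assoc _ Z, Matrix.mul_assoc, nonsing_inv_mul _ hZMZ.det_pos.ne'.isUnit]
  set N : Matrix (Fin (n - m)) (Fin n) ℝ := (Z * M * Zᵀ)⁻¹ * Z * M
  have hright : fromRows J N * fromCols (dynConsistentPseudoinverse M J) Zᵀ = 1 := by
    rw [fromRows_mul_fromCols, hJJp, hJZ, hNJp, hNZ, fromBlocks_one]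
  have hleft : fromCols (dynConsistentPseudoinverse M J) Zᵀ * fromRows J N = 1 :=
    (fromCols_mul_fromRows_eq_one_comm
      ((finCongr (Nat.add_sub_cancel' hmn).symm).trans finSumFinEquiv.symm) _ _ _ _).2 hright
  refine ⟨hright, hleft, hJJp, hJZ, hNJp, hNZ, ?_⟩
  rw [← fromCols_mul_fromRows, hleft]
end

section
/- With N = (Z M Zᵀ)⁻¹ Z M, the extended mobility end-point tensor Λ̄ = (J̄ M⁻¹ J̄ᵀ)⁻¹ is block diagonal: the off-diagonal block vanishes, J M⁻¹ Nᵀ = 0, and Λ̄ = blockdiag(Λ_t, Λ_ν) with Λ_t = (J M⁻¹ Jᵀ)⁻¹ and Λ_ν = (N M⁻¹ Nᵀ)⁻¹ = Z M Zᵀ. -/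
/-!
With `A = Z M Zᵀ` and `N = A⁻¹ Z M` one has `Nᵀ = M Zᵀ A⁻¹`, so `M⁻¹ Nᵀ = Zᵀ A⁻¹`: the inertia
cancels, and `J M⁻¹ Nᵀ = (J Zᵀ) A⁻¹ = 0` while `N M⁻¹ Nᵀ = A⁻¹ A A⁻¹ = A⁻¹`. Hence
`J̄ M⁻¹ J̄ᵀ` is block diagonal with invertible diagonal blocks (`J M⁻¹ Jᵀ` and `Z M Zᵀ` are
positive definite because `J` and `Z` have full row rank), and it is inverted blockwise.
-/

open Matrix

namespace Matrix

theorem vecMul_injective_of_rank_eq_card {K m n : Type*} [Field K] [Fintype m] [Fintype n]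
    {B : Matrix m n K} (hB : B.rank = Fintype.card m) : Function.Injective B.vecMul := by
  rw [vecMul_injective_iff, linearIndependent_iff_card_eq_finrank_span, ← hB,
    rank_eq_finrank_span_row, Set.finrank]

theorem PosDef.mul_mul_transpose_of_rank_eq_card_s11 {m n : Type*} [Fintype m] [Fintype n]
    {M : Matrix n n ℝ} (hM : M.PosDef) {B : Matrix m n ℝ} (hB : B.rank = Fintype.card m) :
    (B * M * Bᵀ).PosDef := by
  simpa using hM.mul_mul_conjTranspose_same (vecMul_injective_of_rank_eq_card hB)

section BlockDiagonal

variable {R : Type*} [CommRing R] {m k n : Type*} [Fintype n]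

theorem fromRows_mul_mul_transpose_fromRows_of_mul_mul_transpose_eq_zero
    {J : Matrix m n R} {N : Matrix k n R} {W : Matrix n n R} (hW : Wᵀ = W)
    (hJN : J * W * Nᵀ = 0) :
    fromRows J N * W * (fromRows J N)ᵀ = fromBlocks (J * W * Jᵀ) 0 0 (N * W * Nᵀ) := by
  have hNJ : N * W * Jᵀ = 0 := by
    simpa only [transpose_mul, transpose_transpose, hW, transpose_zero, Matrix.mul_assoc]
      using congrArg transpose hJN
  rw [transpose_fromRows, fromRows_mul, fromRows_mul_fromCols, hJN, hNJ]

theorem inv_fromBlocks_zero_zero_of_isUnit_iff [Fintype m] [Fintype k] [DecidableEq m]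
    [DecidableEq k] {A : Matrix m m R} {D : Matrix k k R} (hAD : IsUnit A ↔ IsUnit D) :
    (fromBlocks A 0 0 D)⁻¹ = fromBlocks A⁻¹ 0 0 D⁻¹ := by
  simp [inv_fromBlocks_zero₂₁_of_isUnit_iff A 0 D hAD]

end BlockDiagonal

section NullSpaceBase

variable {R : Type*} [CommRing R] {m k n : Type*} [Fintype n] [Fintype k] [DecidableEq k]

noncomputable def nullSpaceBase (M : Matrix n n R) (Z : Matrix k n R) : Matrix k n R :=
  (Z * M * Zᵀ)⁻¹ * Z * M

variable {M : Matrix n n R} (Z : Matrix k n R)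

theorem transpose_nullSpaceBase (hM : Mᵀ = M) :
    (nullSpaceBase M Z)ᵀ = M * Zᵀ * (Z * M * Zᵀ)⁻¹ := by
  have hAt : (Z * M * Zᵀ)ᵀ = Z * M * Zᵀ := by
    rw [transpose_mul, transpose_mul, transpose_transpose, hM, Matrix.mul_assoc]
  rw [nullSpaceBase, transpose_mul, transpose_mul, transpose_nonsing_inv, hAt, hM,
    ← Matrix.mul_assoc]

variable [DecidableEq n]

theorem mul_inv_mul_transpose_nullSpaceBase_eq_zero (hM : Mᵀ = M) (hMu : IsUnit M.det)
    {J : Matrix m n R} (hJZ : J * Zᵀ = 0) :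
    J * M⁻¹ * (nullSpaceBase M Z)ᵀ = 0 := by
  rw [transpose_nullSpaceBase Z hM]
  calc J * M⁻¹ * (M * Zᵀ * (Z * M * Zᵀ)⁻¹) = J * (M⁻¹ * M) * Zᵀ * (Z * M * Zᵀ)⁻¹ := by
        simp only [Matrix.mul_assoc]
    _ = 0 := by rw [nonsing_inv_mul M hMu, Matrix.mul_one, hJZ, Matrix.zero_mul]

theorem nullSpaceBase_mul_inv_mul_transpose_self (hM : Mᵀ = M) (hMu : IsUnit M.det)
    (hA : IsUnit (Z * M * Zᵀ).det) :
    nullSpaceBase M Z * M⁻¹ * (nullSpaceBase M Z)ᵀ = (Z * M * Zᵀ)⁻¹ := by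
  rw [transpose_nullSpaceBase Z hM]
  calc nullSpaceBase M Z * M⁻¹ * (M * Zᵀ * (Z * M * Zᵀ)⁻¹)
        = (Z * M * Zᵀ)⁻¹ * (Z * (M * (M⁻¹ * M)) * Zᵀ) * (Z * M * Zᵀ)⁻¹ := by
          simp only [nullSpaceBase, Matrix.mul_assoc]
    _ = (Z * M * Zᵀ)⁻¹ := by
          rw [nonsing_inv_mul M hMu, Matrix.mul_one, nonsing_inv_mul _ hA, Matrix.one_mul]

end NullSpaceBase

end Matrix

theorem extended_mobility_tensor_block_diagonal_general
    {n m : ℕ}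
    (M : Matrix (Fin n) (Fin n) ℝ) (J : Matrix (Fin m) (Fin n) ℝ)
    (Z : Matrix (Fin (n - m)) (Fin n) ℝ)
    (hM : M.PosDef) (hJ : J.rank = m)
    (hZ : Z.rank = n - m) (hJZ : J * Zᵀ = 0) :
    J * M⁻¹ * ((Z * M * Zᵀ)⁻¹ * Z * M)ᵀ = 0 ∧
    ((fromRows J ((Z * M * Zᵀ)⁻¹ * Z * M)) * M⁻¹ *
        (fromRows J ((Z * M * Zᵀ)⁻¹ * Z * M))ᵀ)⁻¹ =
      fromBlocks ((J * M⁻¹ * Jᵀ)⁻¹) 0 0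
        ((((Z * M * Zᵀ)⁻¹ * Z * M) * M⁻¹ * ((Z * M * Zᵀ)⁻¹ * Z * M)ᵀ)⁻¹) ∧
    (((Z * M * Zᵀ)⁻¹ * Z * M) * M⁻¹ * ((Z * M * Zᵀ)⁻¹ * Z * M)ᵀ)⁻¹ =
        Z * M * Zᵀ := by
  rw [show (Z * M * Zᵀ)⁻¹ * Z * M = nullSpaceBase M Z from rfl]
  have hMt : Mᵀ = M := hM.isHermitian
  have hMu : IsUnit M.det := (isUnit_iff_isUnit_det M).mp hM.isUnit
  have hA : (Z * M * Zᵀ).PosDef := hM.mul_mul_transpose_of_rank_eq_card_s11 (by simpa using hZ)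
  have hAu : IsUnit (Z * M * Zᵀ).det := (isUnit_iff_isUnit_det _).mp hA.isUnit
  have hΛt : (J * M⁻¹ * Jᵀ).PosDef := hM.inv.mul_mul_transpose_of_rank_eq_card_s11 (by simpa using hJ)
  have hoff := mul_inv_mul_transpose_nullSpaceBase_eq_zero Z hMt hMu hJZ
  have hΛν := nullSpaceBase_mul_inv_mul_transpose_self Z hMt hMu hAu
  refine ⟨hoff, ?_, by rw [hΛν, nonsing_inv_nonsing_inv _ hAu]⟩
  have hΛνu : IsUnit (nullSpaceBase M Z * M⁻¹ * (nullSpaceBase M Z)ᵀ) := by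
    rw [hΛν]; exact hA.inv.isUnit
  rw [fromRows_mul_mul_transpose_fromRows_of_mul_mul_transpose_eq_zero
      (by rw [transpose_nonsing_inv, hMt]) hoff,
    inv_fromBlocks_zero_zero_of_isUnit_iff (iff_of_true hΛt.isUnit hΛνu)]

/-- With `N = (Z M Zᵀ)⁻¹ Z M` and `J̄ = [J; N]` the extended
Jacobian, the extended mobility end-point tensor `Λ̄ = (J̄ M⁻¹ J̄ᵀ)⁻¹` is block
diagonal: `J M⁻¹ Nᵀ = 0` and `Λ̄ = blockdiag (Λ_t, Λ_ν)` with
`Λ_t = (J M⁻¹ Jᵀ)⁻¹` and `Λ_ν = (N M⁻¹ Nᵀ)⁻¹ = Z M Zᵀ`. -/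
theorem extended_mobility_tensor_block_diagonal
    {n m : ℕ} (hmn : m ≤ n)
    (M : Matrix (Fin n) (Fin n) ℝ) (J : Matrix (Fin m) (Fin n) ℝ)
    (Z : Matrix (Fin (n - m)) (Fin n) ℝ)
    (hM : M.PosDef) (hJ : J.rank = m)
    (hZ : Z.rank = n - m) (hJZ : J * Zᵀ = 0) :
    J * M⁻¹ * ((Z * M * Zᵀ)⁻¹ * Z * M)ᵀ = 0 ∧
    ((fromRows J ((Z * M * Zᵀ)⁻¹ * Z * M)) * M⁻¹ *
        (fromRows J ((Z * M * Zᵀ)⁻¹ * Z * M))ᵀ)⁻¹ =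
      fromBlocks ((J * M⁻¹ * Jᵀ)⁻¹) 0 0
        ((((Z * M * Zᵀ)⁻¹ * Z * M) * M⁻¹ * ((Z * M * Zᵀ)⁻¹ * Z * M)ᵀ)⁻¹) ∧
    (((Z * M * Zᵀ)⁻¹ * Z * M) * M⁻¹ * ((Z * M * Zᵀ)⁻¹ * Z * M)ᵀ)⁻¹ =
        Z * M * Zᵀ :=
  extended_mobility_tensor_block_diagonal_general M J Z hM hJ hZ hJZ
end
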